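/- Let q>1 and let m=(m_p)_{p≥0} be a sequence of positive real numbers with m_0=1. Then m preserves q-Gevrey and Gevrey orders if and only if m is of null Gevrey order, i.e., if and only if there exist a,A>0 with a^p ≤ m_p ≤ A^p for all p∈ℕ₀. -/
import Mathlib


/-- Membership in `E[[t]]_{q,s₁}^{s₂}`: there are `A, B > 0` with
`‖a_p‖ ≤ A B^p (p!)^{s₂} q^{s₁ p(p-1)/2}` for all `p`. -/
def MemQGevreyGevrey {E : Type*} [NormedAddCommGroup E] (q s₁ s₂ : ℝ) (a : ℕ → E) : Prop :=
  ∃ A B : ℝ, 0 < A ∧ 0 < B ∧ ∀ p : ℕ,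
    ‖a p‖ ≤ A * B ^ p * (p.factorial : ℝ) ^ s₂ * q ^ (s₁ * ((p * (p - 1) : ℕ) : ℝ) / 2)

/-- Scaling a member by a geometrically bounded sequence stays in the class. -/
lemma mem_smul_aux {E : Type*} [NormedAddCommGroup E] [NormedSpace ℂ E]
    (q s₁ s₂ : ℝ) (a : ℕ → E) (c : ℕ → ℝ) (C : ℝ) (hC : 0 < C)
    (hc : ∀ p, |c p| ≤ C ^ p) (h : MemQGevreyGevrey q s₁ s₂ a) :
    MemQGevreyGevrey q s₁ s₂ (fun p => ((c p : ℝ) : ℂ) • a p) := by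
  obtain ⟨A, B, hA, hB, hb⟩ := h
  refine ⟨A, B * C, hA, by positivity, fun p => ?_⟩
  have h1 : ‖((c p : ℝ) : ℂ) • a p‖ = |c p| * ‖a p‖ := by
    rw [norm_smul, Complex.norm_real, Real.norm_eq_abs]
  rw [h1, mul_pow]
  have h2 : |c p| * ‖a p‖ ≤ C ^ p * (A * B ^ p * (p.factorial : ℝ) ^ s₂ *
      q ^ (s₁ * ((p * (p - 1) : ℕ) : ℝ) / 2)) := by
    apply mul_le_mul (hc p) (hb p) (norm_nonneg _) (by positivity)
  calc |c p| * ‖a p‖ ≤ _ := h2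
    _ = A * (B ^ p * C ^ p) * (p.factorial : ℝ) ^ s₂ *
        q ^ (s₁ * ((p * (p - 1) : ℕ) : ℝ) / 2) := by ring

/-- From a bound `f p ≤ A * B^p` with `f 0 ≤ 1`, get a geometric bound. -/
lemma geom_bound_aux (A B : ℝ) (hB : 0 < B) (f : ℕ → ℝ) (hf0 : f 0 ≤ 1)
    (h : ∀ p, f p ≤ A * B ^ p) : ∃ C : ℝ, 0 < C ∧ ∀ p, f p ≤ C ^ p := by
  refine ⟨max A 1 * max B 1, by positivity, fun p => ?_⟩
  cases p with
  | zero => simpa using hf0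
  | succ n =>
    have hA1 : (1 : ℝ) ≤ max A 1 := le_max_right _ _
    have hB1 : (1 : ℝ) ≤ max B 1 := le_max_right _ _
    have h1 : A ≤ (max A 1) ^ (n + 1) :=
      le_trans (le_max_left _ _) (le_self_pow₀ (by linarith) (Nat.succ_ne_zero n))
    have h2 : B ^ (n + 1) ≤ (max B 1) ^ (n + 1) :=
      pow_le_pow_left₀ hB.le (le_max_left _ _) _
    calc f (n + 1) ≤ A * B ^ (n + 1) := h (n + 1)
      _ ≤ (max A 1) ^ (n + 1) * (max B 1) ^ (n + 1) := by
          exact mul_le_mul h1 h2 (by positivity) (by positivity)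
      _ = (max A 1 * max B 1) ^ (n + 1) := (mul_pow _ _ _).symm

/-- a normalized positive sequence `m` preserves `q`-Gevrey and Gevrey orders
iff it is of null Gevrey order, i.e. `a^p ≤ m_p ≤ A^p` for some `a, A > 0`. -/
theorem stmt6 {E : Type*} [NormedAddCommGroup E] [NormedSpace ℂ E] [CompleteSpace E]
    [Nontrivial E]
    (q : ℝ) (hq : 1 < q) (m : ℕ → ℝ) (hm : ∀ p : ℕ, 0 < m p) (hm0 : m 0 = 1) :
    (∀ s₁ s₂ : ℝ, ∀ a : ℕ → E,
        MemQGevreyGevrey q s₁ s₂ a ↔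
        MemQGevreyGevrey q s₁ s₂ (fun p => (((m p)⁻¹ : ℝ) : ℂ) • a p)) ↔
    (∃ a A : ℝ, 0 < a ∧ 0 < A ∧ ∀ p : ℕ, a ^ p ≤ m p ∧ m p ≤ A ^ p) := by
  have hq0 : (0 : ℝ) < q := by linarith
  constructor
  · intro h
    obtain ⟨v, hv⟩ := exists_ne (0 : E)
    have hv0 : 0 < ‖v‖ := norm_pos_iff.mpr hv
    -- simplify the membership condition at s₁ = s₂ = 0
    have hsimp : ∀ a : ℕ → E, MemQGevreyGevrey q 0 0 a ↔
        ∃ A B : ℝ, 0 < A ∧ 0 < B ∧ ∀ p : ℕ, ‖a p‖ ≤ A * B ^ p := by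
      intro a
      unfold MemQGevreyGevrey
      constructor
      · rintro ⟨A, B, hA, hB, hb⟩
        refine ⟨A, B, hA, hB, fun p => ?_⟩
        have := hb p
        simpa [Real.rpow_zero] using this
      · rintro ⟨A, B, hA, hB, hb⟩
        refine ⟨A, B, hA, hB, fun p => ?_⟩
        simpa [Real.rpow_zero] using hb p
    -- upper bound: apply to a p = m p • v, whose Borel transform is the constant v
    have hconstv : MemQGevreyGevrey q 0 0 (fun _ : ℕ => v) :=
      (hsimp _).mpr ⟨‖v‖, 1, hv0, one_pos, fun p => by simp⟩
    have hupper : ∃ C : ℝ, 0 < C ∧ ∀ p, m p ≤ C ^ p := by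
      have key : MemQGevreyGevrey q 0 0 (fun p : ℕ => ((m p : ℝ) : ℂ) • v) := by
        apply (h 0 0 (fun p : ℕ => ((m p : ℝ) : ℂ) • v)).mpr
        have : (fun p => (((m p)⁻¹ : ℝ) : ℂ) • ((m p : ℝ) : ℂ) • v) = fun _ : ℕ => v := by
          funext p
          rw [smul_smul, ← Complex.ofReal_mul, inv_mul_cancel₀ (hm p).ne']
          simp
        rw [this]; exact hconstv
      obtain ⟨A, B, hA, hB, hb⟩ := (hsimp _).mp key
      have hb' : ∀ p, m p ≤ (A / ‖v‖) * B ^ p := by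
        intro p
        have h1 := hb p
        have h2 : ‖((m p : ℝ) : ℂ) • v‖ = m p * ‖v‖ := by
          rw [norm_smul, Complex.norm_real, Real.norm_eq_abs, abs_of_pos (hm p)]
        rw [h2] at h1
        rw [div_mul_eq_mul_div, le_div_iff₀ hv0]
        linarith
      exact geom_bound_aux _ _ hB _ (le_of_eq hm0) hb'
    -- lower bound: apply to the constant sequence v
    have hlower : ∃ C : ℝ, 0 < C ∧ ∀ p, (m p)⁻¹ ≤ C ^ p := by
      have key : MemQGevreyGevrey q 0 0 (fun p : ℕ => (((m p)⁻¹ : ℝ) : ℂ) • v) :=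
        (h 0 0 (fun _ : ℕ => v)).mp hconstv
      obtain ⟨A, B, hA, hB, hb⟩ := (hsimp _).mp key
      have hb' : ∀ p, (m p)⁻¹ ≤ (A / ‖v‖) * B ^ p := by
        intro p
        have h1 := hb p
        have h2 : ‖(((m p)⁻¹ : ℝ) : ℂ) • v‖ = (m p)⁻¹ * ‖v‖ := by
          rw [norm_smul, Complex.norm_real, Real.norm_eq_abs,
            abs_of_pos (inv_pos.mpr (hm p))]
        rw [h2] at h1
        rw [div_mul_eq_mul_div, le_div_iff₀ hv0]
        linarith
      exact geom_bound_aux _ _ hB _ (by rw [hm0]; norm_num) hb'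
    obtain ⟨C₂, hC₂, hC₂b⟩ := hupper
    obtain ⟨C₁, hC₁, hC₁b⟩ := hlower
    refine ⟨C₁⁻¹, C₂, inv_pos.mpr hC₁, hC₂, fun p => ⟨?_, hC₂b p⟩⟩
    rw [inv_pow, inv_le_comm₀ (by positivity) (hm p)]
    exact hC₁b p
  · rintro ⟨a, A, ha, hA, hbd⟩ s₁ s₂ u
    constructor
    · intro hu
      apply mem_smul_aux q s₁ s₂ u (fun p => (m p)⁻¹) a⁻¹ (inv_pos.mpr ha) ?_ hu
      intro p
      rw [abs_of_pos (inv_pos.mpr (hm p)), inv_pow]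
      exact inv_anti₀ (by positivity) (hbd p).1
    · intro hu
      have key := mem_smul_aux q s₁ s₂ (fun p => (((m p)⁻¹ : ℝ) : ℂ) • u p)
        (fun p => m p) A hA (fun p => by rw [abs_of_pos (hm p)]; exact (hbd p).2) hu
      have : (fun p => ((m p : ℝ) : ℂ) • (((m p)⁻¹ : ℝ) : ℂ) • u p) = u := by
        funext p
        rw [smul_smul, ← Complex.ofReal_mul, mul_inv_cancel₀ (hm p).ne']
        simp
      rwa [this] at key
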